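/- arXiv:2501.14416 — 2 statements merged into one kernel-verified Lean document; each statement's English description precedes it below -/
import Mathlib

section
/- Let I ⊆ ℝ be an interval and let f = (y, z) : ℝ → ℝ × ℝ be a solution of the system on I, i.e., for every t ∈ I, f has derivative F(f(t)) at t. If z(t) ≠ 0 for all t ∈ I, then the function t ↦ e^{(c0 - b0)·t} · y(t)/z(t) is constant on I (equivalently, g = y/z satisfies g'(t) = (b0 - c0)·g(t) on I). In other words, e^{(c0 - b0)t} y z^{-1} is a Darboux invariant of the system. -/
/-- The vector field of the planar Kolmogorov system
`ẏ = y(b0 + b1 y z + b2 y + b3 z)`, `ż = z(c0 + b1 y z + b2 y + b3 z)`. -/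
def kolmogorovField (b0 b1 b2 b3 c0 : ℝ) (p : ℝ × ℝ) : ℝ × ℝ :=
  (p.1 * (b0 + b1 * p.1 * p.2 + b2 * p.1 + b3 * p.2),
   p.2 * (c0 + b1 * p.1 * p.2 + b2 * p.1 + b3 * p.2))

/-- `e^{(c0-b0)t} y z^{-1}` is a Darboux invariant: along any solution of the system on
an interval `I` with nonvanishing second component, the function
`t ↦ e^{(c0-b0)t}·y(t)/z(t)` is constant on `I`. -/
theorem darboux_invariant (b0 b1 b2 b3 c0 : ℝ) (I : Set ℝ) (hI : I.OrdConnected)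
    (f : ℝ → ℝ × ℝ)
    (hf : ∀ t ∈ I, HasDerivAt f (kolmogorovField b0 b1 b2 b3 c0 (f t)) t)
    (hz : ∀ t ∈ I, (f t).2 ≠ 0) :
    ∀ s ∈ I, ∀ t ∈ I,
      Real.exp ((c0 - b0) * s) * (f s).1 / (f s).2
        = Real.exp ((c0 - b0) * t) * (f t).1 / (f t).2 := by
  set g : ℝ → ℝ := fun t => Real.exp ((c0 - b0) * t) * (f t).1 / (f t).2 with hg
  have key : ∀ t ∈ I, HasDerivAt g 0 t := by
    intro t ht
    have hft := hf t ht
    have hzt := hz t ht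
    have hy : HasDerivAt (fun t => (f t).1)
        (kolmogorovField b0 b1 b2 b3 c0 (f t)).1 t := by
      simpa using (hft.hasFDerivAt.fst).hasDerivAt
    have hzd : HasDerivAt (fun t => (f t).2)
        (kolmogorovField b0 b1 b2 b3 c0 (f t)).2 t := by
      simpa using (hft.hasFDerivAt.snd).hasDerivAt
    have he : HasDerivAt (fun t => Real.exp ((c0 - b0) * t))
        (Real.exp ((c0 - b0) * t) * (c0 - b0)) t := by
      simpa [Function.comp_def] using (Real.hasDerivAt_exp ((c0 - b0) * t)).comp t
        ((hasDerivAt_id t).const_mul (c0 - b0))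
    have hnum := he.mul hy
    have : HasDerivAt g _ t := hnum.div hzd hzt
    convert this using 1
    simp only [kolmogorovField, Pi.mul_apply]
    field_simp
    ring
  have main : ∀ s ∈ I, ∀ t ∈ I, s ≤ t → g t = g s := by
    intro s hs t ht hst
    have hsub : Set.Icc s t ⊆ I := hI.out hs ht
    exact constant_of_has_deriv_right_zero
      (fun x hx => ((key x (hsub hx)).continuousAt).continuousWithinAt)
      (fun x hx => ((key x (hsub (Set.mem_Icc_of_Ico hx))).hasDerivWithinAt))
      t (Set.right_mem_Icc.mpr hst)
  intro s hs t ht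
  rcases le_total s t with h | h
  · exact (main s hs t ht h).symm
  · exact main t ht s hs h
end

section
/- Assume b0 ≠ c0. Then the system has no nonconstant periodic orbits: if f : ℝ → ℝ × ℝ satisfies that for every t ∈ ℝ, f has derivative F(f(t)) at t, and there exists T > 0 with f(t + T) = f(t) for all t ∈ ℝ, then f is constant. In particular the system has no limit cycles. -/
open intervalIntegral

/-- Representation lemma for scalar linear ODEs `y' = a t * y`. -/
lemma linODE_rep (a y : ℝ → ℝ) (ha : Continuous a)
    (hy : ∀ t, HasDerivAt y (a t * y t) t) (s : ℝ) :
    ∀ t, y t = y s * Real.exp (∫ x in s..t, a x) := by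
  set I : ℝ → ℝ := fun t => ∫ x in s..t, a x with hI
  have hIderiv : ∀ t, HasDerivAt I (a t) t := by
    intro t
    exact integral_hasDerivAt_right (ha.intervalIntegrable _ _)
      (ha.stronglyMeasurableAtFilter _ _) ha.continuousAt
  set g : ℝ → ℝ := fun t => y t * Real.exp (-(I t)) with hg
  have hgderiv : ∀ t, HasDerivAt g 0 t := by
    intro t
    have hE : HasDerivAt (fun t => Real.exp (-(I t))) (Real.exp (-(I t)) * (-(a t))) t := by
      have := ((hIderiv t).neg).exp
      simpa [mul_comm] using this
    have : HasDerivAt (fun t => y t * Real.exp (-(I t))) _ t := (hy t).mul hE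
    convert this using 1
    ring
  have hgconst : ∀ t, g t = g s := by
    intro t
    have hdiff : Differentiable ℝ g := fun t => (hgderiv t).differentiableAt
    have h0 : ∀ t, deriv g t = 0 := fun t => (hgderiv t).deriv
    exact is_const_of_deriv_eq_zero hdiff h0 t s
  intro t
  have hgs : g s = y s := by
    simp [hg, hI]
  have hgt := hgconst t
  rw [hgs, hg] at hgt
  have hexp : Real.exp (-(I t)) ≠ 0 := Real.exp_ne_zero _
  have : y t = y s * Real.exp (I t) := by
    have := congrArg (fun u => u * Real.exp (I t)) hgt
    simp only at this
    rw [mul_assoc, ← Real.exp_add] at this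
    simpa using this
  simpa [hI] using this

/-- A periodic solution of `y' = p y + q y²` is constant. -/
lemma oneD_const (p q : ℝ) (y : ℝ → ℝ)
    (hy : ∀ t, HasDerivAt y (p * y t + q * y t ^ 2) t)
    (T : ℝ) (hT : 0 < T) (hper : ∀ t, y (t + T) = y t) :
    ∀ s t, y s = y t := by
  set h : ℝ → ℝ := fun u => p * u + q * u ^ 2 with hh
  set g : ℝ → ℝ := fun t => p * (y t) ^ 2 / 2 + q * (y t) ^ 3 / 3 with hg
  have hgderiv : ∀ t, HasDerivAt g ((h (y t)) ^ 2) t := by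
    intro t
    have h1 : HasDerivAt (fun t => (y t) ^ 2) ((2 : ℕ) * y t ^ 1 * (p * y t + q * y t ^ 2)) t :=
      (hy t).pow 2
    have h2 : HasDerivAt (fun t => (y t) ^ 3) ((3 : ℕ) * y t ^ 2 * (p * y t + q * y t ^ 2)) t :=
      (hy t).pow 3
    have : HasDerivAt (fun t => p * (y t) ^ 2 / 2 + q * (y t) ^ 3 / 3) _ t :=
      ((h1.const_mul p).div_const 2).add ((h2.const_mul q).div_const 3)
    convert this using 1
    simp [hh]
    ring
  have hgmono : Monotone g := by
    apply monotone_of_deriv_nonneg (fun t => (hgderiv t).differentiableAt)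
    intro t
    rw [(hgderiv t).deriv]
    positivity
  have hgper : ∀ t, g (t + T) = g t := by
    intro t; simp [hg, hper t]
  have hgpern : ∀ (t : ℝ) (n : ℕ), g (t + n * T) = g t := by
    intro t n
    induction n with
    | zero => simp
    | succ n ih =>
      have heq : t + ((n : ℕ) + 1 : ℕ) * T = (t + n * T) + T := by push_cast; ring
      rw [heq, hgper, ih]
  have hgconst : ∀ s t, g s = g t := by
    have key : ∀ s t : ℝ, s ≤ t → g s = g t := by
      intro s t hst
      obtain ⟨n, hn⟩ := exists_nat_ge ((t - s) / T)
      have hnT : t ≤ s + n * T := by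
        have := (div_le_iff₀ hT).mp hn
        linarith
      have h1 : g s ≤ g t := hgmono hst
      have h2 : g t ≤ g (s + n * T) := hgmono hnT
      rw [hgpern s n] at h2
      linarith
    intro s t
    rcases le_total s t with hst | hts
    · exact key s t hst
    · exact (key t s hts).symm
  have hyderiv0 : ∀ t, h (y t) = 0 := by
    intro t
    have hgfun : g = fun _ => g 0 := funext fun t => hgconst t 0
    have h0 : HasDerivAt g 0 t := by rw [hgfun]; exact hasDerivAt_const t (g 0)
    have hsq := (hgderiv t).unique h0
    exact pow_eq_zero_iff (n := 2) (by norm_num) |>.mp hsq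
  have hy0 : ∀ t, HasDerivAt y 0 t := by
    intro t
    have hd := hy t
    rw [show p * y t + q * y t ^ 2 = h (y t) from by simp [hh], hyderiv0 t] at hd
    exact hd
  intro s t
  exact is_const_of_deriv_eq_zero (fun t => (hy0 t).differentiableAt)
    (fun t => (hy0 t).deriv) s t

/-- If `b0 ≠ c0` the system has no nonconstant periodic orbits: every periodic solution
is constant. In particular the system has no limit cycles. -/
theorem no_periodic_orbits (b0 b1 b2 b3 c0 : ℝ) (h : b0 ≠ c0) (f : ℝ → ℝ × ℝ)
    (hf : ∀ t : ℝ, HasDerivAt f (kolmogorovField b0 b1 b2 b3 c0 (f t)) t)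
    (T : ℝ) (hT : 0 < T) (hper : ∀ t : ℝ, f (t + T) = f t) :
    ∀ s t : ℝ, f s = f t := by
  set y : ℝ → ℝ := fun t => (f t).1 with hy'
  set z : ℝ → ℝ := fun t => (f t).2 with hz'
  have hyD : ∀ t, HasDerivAt y ((kolmogorovField b0 b1 b2 b3 c0 (f t)).1) t := by
    intro t
    exact (ContinuousLinearMap.fst ℝ ℝ ℝ).hasFDerivAt.comp_hasDerivAt t (hf t)
  have hzD : ∀ t, HasDerivAt z ((kolmogorovField b0 b1 b2 b3 c0 (f t)).2) t := by
    intro t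
    exact (ContinuousLinearMap.snd ℝ ℝ ℝ).hasFDerivAt.comp_hasDerivAt t (hf t)
  have hycont : Continuous y := continuous_iff_continuousAt.mpr fun t => (hyD t).continuousAt
  have hzcont : Continuous z := continuous_iff_continuousAt.mpr fun t => (hzD t).continuousAt
  set A : ℝ → ℝ := fun t => b1 * y t * z t + b2 * y t + b3 * z t with hA
  have hAcont : Continuous A := by
    apply Continuous.add
    apply Continuous.add
    · exact (continuous_const.mul hycont).mul hzcont
    · exact continuous_const.mul hycont
    · exact continuous_const.mul hzcont
  have hAy : Continuous (fun t => b0 + A t) := continuous_const.add hAcont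
  have hAz : Continuous (fun t => c0 + A t) := continuous_const.add hAcont
  have hyfst : ∀ t, (f t).1 = y t := fun t => rfl
  have hzsnd : ∀ t, (f t).2 = z t := fun t => rfl
  have hyD' : ∀ t, HasDerivAt y ((b0 + A t) * y t) t := by
    intro t
    have hd := hyD t
    convert hd using 1
    simp only [kolmogorovField, hyfst, hzsnd, hA]
    ring
  have hzD' : ∀ t, HasDerivAt z ((c0 + A t) * z t) t := by
    intro t
    have hd := hzD t
    convert hd using 1
    simp only [kolmogorovField, hyfst, hzsnd, hA]
    ring
  have hyper : ∀ t, y (t + T) = y t := fun t => by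
    show (f (t + T)).1 = (f t).1; rw [hper t]
  have hzper : ∀ t, z (t + T) = z t := fun t => by
    show (f (t + T)).2 = (f t).2; rw [hper t]
  have step1 : ∀ s : ℝ, y s = 0 ∨ z s = 0 := by
    intro s
    by_contra hc
    push_neg at hc
    obtain ⟨hy0, hz0⟩ := hc
    have repy := linODE_rep _ y hAy hyD' s (s + T)
    have repz := linODE_rep _ z hAz hzD' s (s + T)
    rw [hyper s] at repy
    rw [hzper s] at repz
    have hIy0 : (∫ x in s..(s + T), (b0 + A x)) = 0 := by
      have := (mul_right_eq_self₀.mp repy.symm).resolve_right hy0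
      exact Real.exp_injective (this.trans Real.exp_zero.symm)
    have hIz0 : (∫ x in s..(s + T), (c0 + A x)) = 0 := by
      have := (mul_right_eq_self₀.mp repz.symm).resolve_right hz0
      exact Real.exp_injective (this.trans Real.exp_zero.symm)
    have hsub : (∫ x in s..(s + T), (b0 + A x)) - (∫ x in s..(s + T), (c0 + A x))
        = ∫ _x in s..(s + T), (b0 - c0 : ℝ) := by
      rw [← intervalIntegral.integral_sub (hAy.intervalIntegrable _ _)
        (hAz.intervalIntegrable _ _)]
      congr 1
      funext x
      ring
    rw [hIy0, hIz0, intervalIntegral.integral_const] at hsub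
    simp only [add_sub_cancel_left, smul_eq_mul, sub_zero] at hsub
    have hbc : b0 - c0 ≠ 0 := sub_ne_zero.mpr h
    have : T * (b0 - c0) ≠ 0 := mul_ne_zero (ne_of_gt hT) hbc
    exact this hsub.symm
  have yzero : y 0 = 0 → ∀ t, y t = 0 := by
    intro h0 t
    rw [linODE_rep _ y hAy hyD' 0 t, h0, zero_mul]
  have zzero : z 0 = 0 → ∀ t, z t = 0 := by
    intro h0 t
    rw [linODE_rep _ z hAz hzD' 0 t, h0, zero_mul]
  rcases step1 0 with h0 | h0
  · -- y ≡ 0, z solves z' = c0 z + b3 z²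
    have hyall : ∀ t, y t = 0 := yzero h0
    have hz1 : ∀ t, HasDerivAt z (c0 * z t + b3 * z t ^ 2) t := by
      intro t
      have hd := hzD t
      convert hd using 1
      simp only [kolmogorovField, hyfst, hzsnd, hyall t]
      ring
    have hzconst := oneD_const c0 b3 z hz1 T hT hzper
    intro s t
    refine Prod.ext ?_ ?_
    · rw [hyfst s, hyfst t, hyall s, hyall t]
    · rw [hzsnd s, hzsnd t, hzconst s t]
  · -- z ≡ 0, y solves y' = b0 y + b2 y²
    have hzall : ∀ t, z t = 0 := zzero h0
    have hy1 : ∀ t, HasDerivAt y (b0 * y t + b2 * y t ^ 2) t := by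
      intro t
      have hd := hyD t
      convert hd using 1
      simp only [kolmogorovField, hyfst, hzsnd, hzall t]
      ring
    have hyconst := oneD_const b0 b2 y hy1 T hT hyper
    intro s t
    refine Prod.ext ?_ ?_
    · rw [hyfst s, hyfst t, hyconst s t]
    · rw [hzsnd s, hzsnd t, hzall s, hzall t]
end
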